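/- Let α, β, γ, μ, ν be an admissible solution of System B on [0,∞) with β ≡ γ, and set τ := μ²+ν². Then there exists t₁ ≥ 0 such that μ(t) > 0 for all t ≥ t₁ (in particular τ(t) > 0 for t ≥ t₁), the function μ/√τ is nondecreasing on [t₁,∞), and μ(t)/√(τ(t)) → 1 as t → ∞ (i.e. μ ∼ √τ). -/

import Mathlib

/-!
Along an admissible solution, `(μ√α)' = 8√α`, `(ν√α)' = 0` and `(αβγ)' = 32βγ > 0`.
Since `αβγ` is nondecreasing, `βγ` is large whenever `α` is small, and then `α' > 0`; so `α`
stays above some `d > 0` and `M := μ√α` grows at least like `8√d · t`. Finally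
`μ/√τ = M/√(M² + N²)` with `N := ν√α` constant, which is increasing in `M` and tends to `1`.
-/

open Set Filter Real Topology

/-- **System B**: the homogeneous Ricci flow equations on `SL(2,ℂ)/U(1)` for
real-valued differentiable functions `α β γ μ ν` on a set `s`, with `τ := μ² + ν²`,
together with the admissibility conditions `α > 0`, `β > 0`, `γ > 0`, `βγ > τ`. -/
def IsAdmissibleSolutionB (α β γ μ ν : ℝ → ℝ) (s : Set ℝ) : Prop :=
  ∀ t ∈ s,
    0 < α t ∧ 0 < β t ∧ 0 < γ t ∧
    μ t ^ 2 + ν t ^ 2 < β t * γ t ∧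
    HasDerivWithinAt α
      (2 * (16 * β t * γ t - α t ^ 2) / (β t * γ t - (μ t ^ 2 + ν t ^ 2))) s t ∧
    HasDerivWithinAt β
      (-(β t * (16 * (μ t ^ 2 + ν t ^ 2) - α t ^ 2)) /
        (α t * (β t * γ t - (μ t ^ 2 + ν t ^ 2)))) s t ∧
    HasDerivWithinAt γ
      (-(γ t * (16 * (μ t ^ 2 + ν t ^ 2) - α t ^ 2)) /
        (α t * (β t * γ t - (μ t ^ 2 + ν t ^ 2)))) s t ∧
    HasDerivWithinAt μ
      (8 - μ t * (16 * β t * γ t - α t ^ 2) /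
        (α t * (β t * γ t - (μ t ^ 2 + ν t ^ 2)))) s t ∧
    HasDerivWithinAt ν
      (-(ν t * (16 * β t * γ t - α t ^ 2)) /
        (α t * (β t * γ t - (μ t ^ 2 + ν t ^ 2)))) s t

section FencingOnIci

variable {f f' : ℝ → ℝ} {a : ℝ}

lemma continuousOn_Icc_and_hasDerivWithinAt_Ici_of_Ici
    (hf : ∀ x ∈ Ici a, HasDerivWithinAt f (f' x) (Ici a) x) (b : ℝ) :
    ContinuousOn f (Icc a b) ∧ ∀ x ∈ Ico a b, HasDerivWithinAt f (f' x) (Ici x) x :=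
  ⟨fun x hx => (hf x hx.1).continuousWithinAt.mono Icc_subset_Ici_self,
    fun x hx => (hf x hx.1).mono (Ici_subset_Ici.2 hx.1)⟩

lemma le_of_hasDerivWithinAt_Ici_of_pos_of_eq {d : ℝ}
    (hf : ∀ x ∈ Ici a, HasDerivWithinAt f (f' x) (Ici a) x) (ha : d ≤ f a)
    (hpos : ∀ x ∈ Ici a, f x = d → 0 < f' x) {x : ℝ} (hx : a ≤ x) : d ≤ f x := by
  obtain ⟨hcont, hderiv⟩ := continuousOn_Icc_and_hasDerivWithinAt_Ici_of_Ici hf x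
  exact image_le_of_deriv_right_lt_deriv_boundary' continuousOn_const
    (fun y _ => hasDerivWithinAt_const y _ d) ha hcont hderiv
    (fun y hy hfy => hpos y hy.1 hfy.symm) ⟨hx, le_rfl⟩

lemma add_mul_sub_le_of_hasDerivWithinAt_Ici {C : ℝ}
    (hf : ∀ x ∈ Ici a, HasDerivWithinAt f (f' x) (Ici a) x) (hC : ∀ x ∈ Ici a, C ≤ f' x)
    {x y : ℝ} (hx : a ≤ x) (hxy : x ≤ y) : f x + C * (y - x) ≤ f y := by
  obtain ⟨hcont, hderiv⟩ := continuousOn_Icc_and_hasDerivWithinAt_Ici_of_Ici hf y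
  have hline : ∀ z, HasDerivWithinAt (fun z => f x + C * (z - x)) C (Ici z) z := fun z => by
    simpa using ((hasDerivWithinAt_id z _).sub_const x).const_mul C |>.const_add (f x)
  exact image_le_of_deriv_right_le_deriv_boundary (by fun_prop) (fun z _ => hline z) (by simp)
    (hcont.mono (Icc_subset_Icc_left hx)) (fun z hz => hderiv z ⟨hx.trans hz.1, hz.2⟩)
    (fun z hz => hC z (hx.trans hz.1)) ⟨hxy, le_rfl⟩

lemma monotoneOn_of_hasDerivWithinAt_Ici_nonneg
    (hf : ∀ x ∈ Ici a, HasDerivWithinAt f (f' x) (Ici a) x) (hf' : ∀ x ∈ Ici a, 0 ≤ f' x) :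
    MonotoneOn f (Ici a) := fun x hx y _ hxy => by
  simpa using add_mul_sub_le_of_hasDerivWithinAt_Ici hf hf' hx hxy

lemma eq_of_hasDerivWithinAt_Ici_zero (hf : ∀ x ∈ Ici a, HasDerivWithinAt f 0 (Ici a) x)
    {x : ℝ} (hx : a ≤ x) : f x = f a := by
  obtain ⟨hcont, hderiv⟩ :=
    continuousOn_Icc_and_hasDerivWithinAt_Ici_of_Ici (f' := fun _ => 0) hf x
  exact constant_of_has_deriv_right_zero hcont hderiv x ⟨hx, le_rfl⟩

lemma tendsto_atTop_of_hasDerivWithinAt_Ici_ge {C : ℝ} (hCpos : 0 < C)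
    (hf : ∀ x ∈ Ici a, HasDerivWithinAt f (f' x) (Ici a) x) (hC : ∀ x ∈ Ici a, C ≤ f' x) :
    Tendsto f atTop atTop := by
  have hline : Tendsto (fun y => f a + C * (y - a)) atTop atTop :=
    tendsto_atTop_add_const_left _ _
      ((tendsto_atTop_add_const_right _ (-a) tendsto_id).const_mul_atTop hCpos)
  refine tendsto_atTop_mono' _ ?_ hline
  filter_upwards [eventually_ge_atTop a] with y hy
  exact add_mul_sub_le_of_hasDerivWithinAt_Ici hf hC le_rfl hy

end FencingOnIci

lemma HasDerivWithinAt.mul_sqrt {f g : ℝ → ℝ} {f' g' t : ℝ} {s : Set ℝ}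
    (hf : HasDerivWithinAt f f' s t) (hg : HasDerivWithinAt g g' s t) (hpos : 0 < g t) :
    HasDerivWithinAt (fun x => f x * √(g x)) (√(g t) * (f' + f t * g' / (2 * g t))) s t := by
  refine (hf.mul (hg.sqrt hpos.ne')).congr_deriv ?_
  have hsq : √(g t) ^ 2 = g t := sq_sqrt hpos.le
  have hne : √(g t) ≠ 0 := (sqrt_pos.2 hpos).ne'
  field_simp
  rw [hsq]
  ring

lemma mul_div_sqrt_mul_sq_add_mul_sq {c : ℝ} (hc : 0 < c) (x y : ℝ) :
    c * x / √((c * x) ^ 2 + (c * y) ^ 2) = x / √(x ^ 2 + y ^ 2) := by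
  rw [show (c * x) ^ 2 + (c * y) ^ 2 = c ^ 2 * (x ^ 2 + y ^ 2) by ring,
    sqrt_mul (sq_nonneg c), sqrt_sq hc.le, mul_div_mul_left _ _ hc.ne']

lemma monotoneOn_div_sqrt_sq_add_sq (k : ℝ) :
    MonotoneOn (fun x => x / √(x ^ 2 + k ^ 2)) (Ioi 0) := by
  intro x (hx : 0 < x) y (hy : 0 < y) hxy
  simp only
  rw [div_le_div_iff₀ (by positivity) (by positivity), ← sqrt_sq hx.le, ← sqrt_sq hy.le,
    ← sqrt_mul (sq_nonneg x), ← sqrt_mul (sq_nonneg y), sqrt_sq hx.le, sqrt_sq hy.le]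
  apply sqrt_le_sqrt
  nlinarith [mul_le_mul hxy hxy hx.le hy.le, sq_nonneg k]

lemma tendsto_div_sqrt_sq_add_sq (k : ℝ) :
    Tendsto (fun x => x / √(x ^ 2 + k ^ 2)) atTop (𝓝 1) := by
  have hlim : Tendsto (fun x : ℝ => (√(1 + (k * x⁻¹) ^ 2))⁻¹) atTop (𝓝 1) := by
    simpa using (((tendsto_inv_atTop_zero.const_mul k).pow 2).const_add 1).sqrt.inv₀
      (by simp)
  refine hlim.congr' ?_
  filter_upwards [eventually_gt_atTop 0] with x hx
  rw [show x ^ 2 + k ^ 2 = x ^ 2 * (1 + (k * x⁻¹) ^ 2) by field_simp,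
    sqrt_mul (sq_nonneg x), sqrt_sq hx.le, div_mul_eq_div_div, div_self hx.ne', one_div]

namespace IsAdmissibleSolutionB

variable {α β γ μ ν : ℝ → ℝ} {s : Set ℝ} {t : ℝ}

lemma hasDerivWithinAt_mu_mul_sqrt_alpha (h : IsAdmissibleSolutionB α β γ μ ν s) (ht : t ∈ s) :
    HasDerivWithinAt (fun x => μ x * √(α x)) (8 * √(α t)) s t := by
  obtain ⟨hα, -, -, hτ, hdα, -, -, hdμ, -⟩ := h t ht
  have hD : β t * γ t - (μ t ^ 2 + ν t ^ 2) ≠ 0 := by linarith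
  refine (hdμ.mul_sqrt hdα hα).congr_deriv ?_
  field_simp
  ring

lemma hasDerivWithinAt_nu_mul_sqrt_alpha (h : IsAdmissibleSolutionB α β γ μ ν s) (ht : t ∈ s) :
    HasDerivWithinAt (fun x => ν x * √(α x)) 0 s t := by
  obtain ⟨hα, -, -, hτ, hdα, -, -, -, hdν⟩ := h t ht
  have hD : β t * γ t - (μ t ^ 2 + ν t ^ 2) ≠ 0 := by linarith
  refine (hdν.mul_sqrt hdα hα).congr_deriv ?_
  field_simp
  ring

lemma hasDerivWithinAt_alpha_mul_beta_mul_gamma (h : IsAdmissibleSolutionB α β γ μ ν s)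
    (ht : t ∈ s) : HasDerivWithinAt (fun x => α x * β x * γ x) (32 * β t * γ t) s t := by
  obtain ⟨hα, -, -, hτ, hdα, hdβ, hdγ, -, -⟩ := h t ht
  have hD : β t * γ t - (μ t ^ 2 + ν t ^ 2) ≠ 0 := by linarith
  refine ((hdα.mul hdβ).mul hdγ).congr_deriv ?_
  simp only [Pi.mul_apply]
  field_simp
  ring

variable {a : ℝ}

lemma exists_pos_le_alpha (h : IsAdmissibleSolutionB α β γ μ ν (Ici a)) :
    ∃ d > 0, ∀ t ∈ Ici a, d ≤ α t := by
  have hP : MonotoneOn (fun x => α x * β x * γ x) (Ici a) :=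
    monotoneOn_of_hasDerivWithinAt_Ici_nonneg
      (fun t ht => h.hasDerivWithinAt_alpha_mul_beta_mul_gamma ht)
      (fun t ht => by obtain ⟨-, hβ, hγ, -⟩ := h t ht; positivity)
  obtain ⟨hα₀, hβ₀, hγ₀, -⟩ := h a self_mem_Ici
  set d := min (α a) (min 1 (α a * β a * γ a))
  have hd : 0 < d := by positivity
  have hd₁ : d ≤ 1 := (min_le_right _ _).trans (min_le_left _ _)
  have hdP : d ≤ α a * β a * γ a := (min_le_right _ _).trans (min_le_right _ _)
  refine ⟨d, hd, fun t ht => le_of_hasDerivWithinAt_Ici_of_pos_of_eq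
    (fun x hx => (h x hx).2.2.2.2.1) (min_le_left _ _) ?_ ht⟩
  intro x hx hαx
  obtain ⟨-, hβ, hγ, hτ, -⟩ := h x hx
  -- `α x * (β x * γ x) ≥ α a * β a * γ a ≥ d ≥ d ^ 3` with `α x = d`, so `β x * γ x ≥ d ^ 2`
  have hPx : α a * β a * γ a ≤ d * β x * γ x := by
    have := hP self_mem_Ici hx hx
    simp only at this
    rwa [hαx] at this
  have hβγ : d ^ 2 ≤ β x * γ x := by nlinarith
  rw [hαx]
  exact div_pos (by nlinarith) (by linarith)

lemma monotoneOn_mu_mul_sqrt_alpha (h : IsAdmissibleSolutionB α β γ μ ν (Ici a)) :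
    MonotoneOn (fun t => μ t * √(α t)) (Ici a) :=
  monotoneOn_of_hasDerivWithinAt_Ici_nonneg (fun t ht => h.hasDerivWithinAt_mu_mul_sqrt_alpha ht)
    (fun t _ => by positivity)

lemma tendsto_mu_mul_sqrt_alpha_atTop (h : IsAdmissibleSolutionB α β γ μ ν (Ici a)) :
    Tendsto (fun t => μ t * √(α t)) atTop atTop := by
  obtain ⟨d, hd, hαd⟩ := h.exists_pos_le_alpha
  exact tendsto_atTop_of_hasDerivWithinAt_Ici_ge (C := 8 * √d) (by positivity)
    (fun t ht => h.hasDerivWithinAt_mu_mul_sqrt_alpha ht)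
    (fun t ht => by gcongr; exact hαd t ht)

lemma div_sqrt_eq_mu_mul_sqrt_alpha_div (h : IsAdmissibleSolutionB α β γ μ ν (Ici a))
    (ht : a ≤ t) : μ t / √(μ t ^ 2 + ν t ^ 2) =
      μ t * √(α t) / √((μ t * √(α t)) ^ 2 + (ν a * √(α a)) ^ 2) := by
  have hν : ν t * √(α t) = ν a * √(α a) :=
    eq_of_hasDerivWithinAt_Ici_zero (fun x hx => h.hasDerivWithinAt_nu_mul_sqrt_alpha hx) ht
  rw [← hν, mul_comm (μ t), mul_comm (ν t),
    mul_div_sqrt_mul_sq_add_mul_sq (sqrt_pos.2 (h t ht).1)]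

end IsAdmissibleSolutionB

theorem systemB_mu_asymptotic_general (α β γ μ ν : ℝ → ℝ)
    (h : IsAdmissibleSolutionB α β γ μ ν (Set.Ici 0)) :
    ∃ t₁ : ℝ, 0 ≤ t₁ ∧
      (∀ t ≥ t₁, 0 < μ t) ∧
      (∀ t ≥ t₁, 0 < μ t ^ 2 + ν t ^ 2) ∧
      MonotoneOn (fun t => μ t / Real.sqrt (μ t ^ 2 + ν t ^ 2)) (Set.Ici t₁) ∧
      Filter.Tendsto (fun t => μ t / Real.sqrt (μ t ^ 2 + ν t ^ 2))
        Filter.atTop (nhds 1) := by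
  set M := fun t => μ t * √(α t)
  have hM : Tendsto M atTop atTop := h.tendsto_mu_mul_sqrt_alpha_atTop
  obtain ⟨t₀, hMpos⟩ := eventually_atTop.1 (hM.eventually_gt_atTop 0)
  set t₁ := max 0 t₀
  have hMpos' : ∀ t ≥ t₁, 0 < M t := fun t ht => hMpos t ((le_max_right _ _).trans ht)
  have hμ : ∀ t ≥ t₁, 0 < μ t := fun t ht => pos_of_mul_pos_left (hMpos' t ht) (sqrt_nonneg _)
  have hratio : EqOn (fun t => M t / √(M t ^ 2 + (ν 0 * √(α 0)) ^ 2))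
      (fun t => μ t / √(μ t ^ 2 + ν t ^ 2)) (Ici 0) := fun t ht =>
    (h.div_sqrt_eq_mu_mul_sqrt_alpha_div ht).symm
  refine ⟨t₁, le_max_left _ _, hμ, fun t ht => by have := hμ t ht; positivity, ?_, ?_⟩
  · refine (((monotoneOn_div_sqrt_sq_add_sq (ν 0 * √(α 0))).comp
      (h.monotoneOn_mu_mul_sqrt_alpha.mono (Ici_subset_Ici.2 (le_max_left _ _)))
      fun t ht => hMpos' t ht).congr ?_)
    exact hratio.mono (Ici_subset_Ici.2 (le_max_left _ _))
  · refine ((tendsto_div_sqrt_sq_add_sq (ν 0 * √(α 0))).comp hM).congr' ?_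
    filter_upwards [eventually_ge_atTop 0] with t ht
    exact hratio ht

/-- For an admissible solution of System B on `[0,∞)` with `β ≡ γ` and `τ := μ² + ν²`:
after some time `t₁ ≥ 0` one has `μ > 0` (in particular `τ > 0`), the quotient `μ/√τ`
is nondecreasing on `[t₁, ∞)`, and `μ/√τ → 1` as `t → ∞` (i.e. `μ ∼ √τ`). -/
theorem systemB_mu_asymptotic (α β γ μ ν : ℝ → ℝ)
    (h : IsAdmissibleSolutionB α β γ μ ν (Set.Ici 0))
    (hβγ : ∀ t ∈ Set.Ici (0 : ℝ), β t = γ t) :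
    ∃ t₁ : ℝ, 0 ≤ t₁ ∧
      (∀ t ≥ t₁, 0 < μ t) ∧
      (∀ t ≥ t₁, 0 < μ t ^ 2 + ν t ^ 2) ∧
      MonotoneOn (fun t => μ t / Real.sqrt (μ t ^ 2 + ν t ^ 2)) (Set.Ici t₁) ∧
      Filter.Tendsto (fun t => μ t / Real.sqrt (μ t ^ 2 + ν t ^ 2))
        Filter.atTop (nhds 1) :=
  systemB_mu_asymptotic_general α β γ μ ν h
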